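/- The mixed capacity C̃_{BV^{p(·)}} is an outer measure on subsets of Ω: C̃_{BV^{p(·)}}(∅) = 0; if E₁ ⊂ E₂ ⊂ Ω then C̃_{BV^{p(·)}}(E₁) ≤ C̃_{BV^{p(·)}}(E₂); and for any countable family E₁, E₂, … ⊂ Ω one has C̃_{BV^{p(·)}}(⋃_{i=1}^∞ E_i) ≤ Σ_{i=1}^∞ C̃_{BV^{p(·)}}(E_i). -/

import Mathlib

open MeasureTheory Filter Topology ENNReal Set

noncomputable section

/-- Euclidean space `ℝⁿ`. -/
abbrev Eu (n : ℕ) : Type := EuclideanSpace ℝ (Fin n)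

/-- The modular `ρ_{p(·)}(u) = ∫_Ω |u|^{p(x)} dx`. -/
def vModular {n : ℕ} (p : Eu n → ℝ) (Ω : Set (Eu n)) (u : Eu n → ℝ) : ℝ≥0∞ :=
  ∫⁻ x in Ω, ENNReal.ofReal (|u x| ^ p x)

/-- The gradient modular `∫_Ω |∇u|^{p(x)} dx` (for a.e. differentiable `u`,
`fderiv` is the gradient). -/
def gradModular {n : ℕ} (p : Eu n → ℝ) (Ω : Set (Eu n)) (u : Eu n → ℝ) : ℝ≥0∞ :=
  ∫⁻ x in Ω, ENNReal.ofReal (‖fderiv ℝ u x‖ ^ p x)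

/-- Membership in the variable exponent Lebesgue space `L^{p(·)}(Ω)`. -/
def MemLpVar {n : ℕ} (p : Eu n → ℝ) (Ω : Set (Eu n)) (u : Eu n → ℝ) : Prop :=
  Measurable u ∧ ∃ l : ℝ, 0 < l ∧ vModular p Ω (fun x => u x / l) < ⊤

/-- The Luxemburg norm on `L^{p(·)}(Ω)`. -/
def luxNorm {n : ℕ} (p : Eu n → ℝ) (Ω : Set (Eu n)) (u : Eu n → ℝ) : ℝ :=
  sInf {l : ℝ | 0 < l ∧ vModular p Ω (fun x => u x / l) ≤ 1}

/-- Convergence `v i → u` in `L^{p(·)}(Ω)` (Luxemburg norm convergence). -/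
def LpTendsto {n : ℕ} (p : Eu n → ℝ) (Ω : Set (Eu n)) (v : ℕ → Eu n → ℝ)
    (u : Eu n → ℝ) : Prop :=
  Tendsto (fun i => luxNorm p Ω (fun x => v i x - u x)) atTop (𝓝 0)

/-- `u` is locally Lipschitz on `Ω`. -/
def LocLipOn {n : ℕ} (Ω : Set (Eu n)) (u : Eu n → ℝ) : Prop :=
  ∀ x ∈ Ω, ∃ K : NNReal, ∃ t ∈ 𝓝[Ω] x, LipschitzOnWith K u t

/-- The relaxed mixed pseudo-modular `ρ̃_{BV^{p(·)}(Ω)}(u)`: the infimum of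
`liminf_i ∫_Ω |∇u_i|^{p(x)} dx` over all sequences of locally Lipschitz functions
in `L^{p(·)}(Ω)` converging to `u` in `L^{p(·)}(Ω)`. -/
def bvModular {n : ℕ} (p : Eu n → ℝ) (Ω : Set (Eu n)) (u : Eu n → ℝ) : ℝ≥0∞ :=
  ⨅ (v : ℕ → Eu n → ℝ)
    (_ : (∀ i, LocLipOn Ω (v i) ∧ MemLpVar p Ω (v i)) ∧ LpTendsto p Ω v u),
    Filter.liminf (fun i => gradModular p Ω (v i)) atTop

/-- Membership in the mixed space `B̃V^{p(·)}(Ω)`. -/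
def MemBVt {n : ℕ} (p : Eu n → ℝ) (Ω : Set (Eu n)) (u : Eu n → ℝ) : Prop :=
  MemLpVar p Ω u ∧ bvModular p Ω u < ⊤

/-- The norm `‖u‖_{B̃V^{p(·)}}`. -/
def bvNorm {n : ℕ} (p : Eu n → ℝ) (Ω : Set (Eu n)) (u : Eu n → ℝ) : ℝ :=
  luxNorm p Ω u + sInf {l : ℝ | 0 < l ∧ bvModular p Ω (fun x => u x / l) ≤ 1}

/-- The admissible class `Ã(E)` for the mixed capacity. -/
def admissibleBV {n : ℕ} (p : Eu n → ℝ) (Ω E : Set (Eu n)) : Set (Eu n → ℝ) :=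
  {u | MemBVt p Ω u ∧ (∀ x ∈ Ω, 0 ≤ u x ∧ u x ≤ 1) ∧
       ∃ U : Set (Eu n), IsOpen U ∧ E ⊆ U ∧ ∀ x ∈ U ∩ Ω, u x = 1}

/-- The mixed BV-Sobolev capacity `C̃_{BV^{p(·)}}(E)` (with `inf ∅ = ∞`). -/
def bvCapacity {n : ℕ} (p : Eu n → ℝ) (Ω E : Set (Eu n)) : ℝ≥0∞ :=
  ⨅ (u : Eu n → ℝ) (_ : u ∈ admissibleBV p Ω E), vModular p Ω u + bvModular p Ω u

/-- Divergence of a vector field. -/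
def divg {n : ℕ} (φ : Eu n → Eu n) (x : Eu n) : ℝ :=
  ∑ i, fderiv ℝ φ x (EuclideanSpace.single i 1) i

/-- Total variation `‖Du‖(U)` on an open set `U`, via the defining supremum over
`C¹` vector fields compactly supported in `U` with `|φ| ≤ 1`. -/
def totVarOpen {n : ℕ} (U : Set (Eu n)) (u : Eu n → ℝ) : ℝ≥0∞ :=
  ⨆ (φ : Eu n → Eu n)
    (_ : ContDiff ℝ 1 φ ∧ HasCompactSupport φ ∧ tsupport φ ⊆ U ∧ ∀ x, ‖φ x‖ ≤ 1),
    ENNReal.ofReal (∫ x in U, u x * divg φ x)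

/-- Total variation `‖Du‖(A)` of a set `A ⊆ Ω`, extended from open sets. -/
def totVarIn {n : ℕ} (Ω A : Set (Eu n)) (u : Eu n → ℝ) : ℝ≥0∞ :=
  ⨅ (U : Set (Eu n)) (_ : IsOpen U ∧ A ⊆ U ∧ U ⊆ Ω), totVarOpen U u

/-- `g` is the weak (distributional) gradient of `u` on `Ω`. -/
def IsWeakGrad {n : ℕ} (Ω : Set (Eu n)) (u : Eu n → ℝ) (g : Eu n → Eu n) : Prop :=
  ∀ φ : Eu n → ℝ, ContDiff ℝ 1 φ → HasCompactSupport φ → tsupport φ ⊆ Ω →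
    ∀ i : Fin n,
      (∫ x in Ω, u x * (fderiv ℝ φ x (EuclideanSpace.single i 1))) =
        - ∫ x in Ω, g x i * φ x

/-- The Harjulehto–Hästö–Latvala mixed pseudo-modular
`ρ_{BV^{p(·)}(F)}(u) = ‖Du‖(F ∩ Y) + ∫_{F∖Y} |∇u|^{p(x)} dx`, where `Y = {p = 1}`
and `g` is the weak gradient of `u` on the Sobolev part. -/
def hhlModular {n : ℕ} (p : Eu n → ℝ) (Ω F : Set (Eu n)) (u : Eu n → ℝ)
    (g : Eu n → Eu n) : ℝ≥0∞ :=
  totVarIn Ω (F ∩ {x | p x = 1}) u +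
    ∫⁻ x in F \ {x | p x = 1}, ENNReal.ofReal (‖g x‖ ^ p x)

/-- The HHL mixed pseudo-modular for (smooth) functions whose gradient is `fderiv`. -/
def hhlModularSmooth {n : ℕ} (p : Eu n → ℝ) (Ω F : Set (Eu n)) (v : Eu n → ℝ) : ℝ≥0∞ :=
  totVarIn Ω (F ∩ {x | p x = 1}) v +
    ∫⁻ x in F \ {x | p x = 1}, ENNReal.ofReal (‖fderiv ℝ v x‖ ^ p x)

/-- Membership in the HHL space `BV^{p(·)}(Ω)`: `u ∈ L^{p(·)}(Ω)` and
`inf{λ > 0 : ρ_{BV^{p(·)}(Ω)}(u/λ) ≤ 1} < ∞`. -/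
def MemBVp {n : ℕ} (p : Eu n → ℝ) (Ω : Set (Eu n)) (u : Eu n → ℝ) : Prop :=
  MemLpVar p Ω u ∧
    ∃ g : Eu n → Eu n, IsWeakGrad (Ω \ {x | p x = 1}) u g ∧
      ∃ l : ℝ, 0 < l ∧
        hhlModular p Ω Ω (fun x => u x / l) (fun x => l⁻¹ • g x) ≤ 1

/-- Mollification `u_δ = φ_δ ∗ u` (with `u` extended by zero outside `Ω`),
where `φ_δ(z) = δ^{-n} φ(z/δ)`. -/
def mollify {n : ℕ} (Ω : Set (Eu n)) (u : Eu n → ℝ) (φ : Eu n → ℝ) (δ : ℝ)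
    (x : Eu n) : ℝ :=
  ∫ y in Ω, (δ ^ n)⁻¹ * φ (δ⁻¹ • (x - y)) * u y

/-- `p` is (locally) log-Hölder continuous on `Ω` with constant `c`. -/
def LogHolderOn {n : ℕ} (c : ℝ) (Ω : Set (Eu n)) (p : Eu n → ℝ) : Prop :=
  ∀ x ∈ Ω, ∀ y ∈ Ω, |p x - p y| ≤ c / Real.log (Real.exp 1 + 1 / dist x y)

/-- `p` is globally log-Hölder continuous on `ℝⁿ` with constant `c`. -/
def LogHolderGlobal {n : ℕ} (c : ℝ) (p : Eu n → ℝ) : Prop :=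
  LogHolderOn c Set.univ p ∧
    ∃ pinf : ℝ, 1 ≤ pinf ∧ ∀ x, |p x - pinf| ≤ c / Real.log (Real.exp 1 + ‖x‖)

/-- The variable exponent Sobolev capacity `C_{p(·)}(E)`: infimum of
`∫ |u|^{p(x)} + |∇u|^{p(x)} dx` over `u ∈ W^{1,p(·)}(ℝⁿ)` with `u ≥ 1` on an
open set containing `E`. -/
def sobolevCapacity {n : ℕ} (p : Eu n → ℝ) (E : Set (Eu n)) : ℝ≥0∞ :=
  ⨅ (u : Eu n → ℝ) (g : Eu n → Eu n)
    (_ : MemLpVar p Set.univ u ∧ IsWeakGrad Set.univ u g ∧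
         MemLpVar p Set.univ (fun x => ‖g x‖) ∧
         ∃ U : Set (Eu n), IsOpen U ∧ E ⊆ U ∧ ∀ x ∈ U, 1 ≤ u x),
    vModular p Set.univ u + ∫⁻ x, ENNReal.ofReal (‖g x‖ ^ p x)

/-! Monotonicity is immediate and `0` is admissible for `∅`; the content is countable
subadditivity. Take admissible `u i` for `E i` almost realising the capacities; their pointwise
supremum `u` is admissible for `⋃ i, E i`. Both modulars are subadditive under `max` (for the
relaxed one because `‖∇ max v w‖ ≤ max ‖∇v‖ ‖∇w‖` a.e. for locally Lipschitz approximants), so the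
partial maxima `w k` have modulars bounded by the sums of those of the `u i`. In the limit, Fatou
handles `vModular`; for `bvModular` a diagonal choice of approximants works once `w k → u` in
modular, which follows by dominated convergence because `p` is bounded. -/

lemma abs_max_sub_max_le_abs_add_abs (a b c d : ℝ) :
    |max a b - max c d| ≤ |a - c| + |b - d| :=
  (abs_max_sub_max_le_max _ _ _ _).trans (max_le_add_of_nonneg (abs_nonneg _) (abs_nonneg _))

lemma abs_div_le_abs_div {a b l m : ℝ} (hab : |a| ≤ |b|) (hl : 0 < l) (hlm : l ≤ m) :
    |a / m| ≤ |b / l| := by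
  rw [abs_div, abs_div, abs_of_pos (hl.trans_le hlm), abs_of_pos hl]
  exact div_le_div₀ (abs_nonneg _) hab hl hlm

lemma Real.rpow_le_max_of_one_le_of_le {c q M : ℝ} (hc : 0 ≤ c) (hq : 1 ≤ q) (hqM : q ≤ M) :
    c ^ q ≤ max c (c ^ M) := by
  rcases le_total c 1 with hc1 | hc1
  · exact le_max_of_le_left <|
      (Real.rpow_le_rpow_of_exponent_ge' hc hc1 zero_le_one hq).trans_eq (Real.rpow_one c)
  · exact le_max_of_le_right (Real.rpow_le_rpow_of_exponent_le hc1 hqM)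

theorem norm_fderiv_max_le {E : Type*} [NormedAddCommGroup E] [NormedSpace ℝ E]
    {v w : E → ℝ} {x : E} (hv : ContinuousAt v x) (hw : ContinuousAt w x)
    (hdv : DifferentiableAt ℝ v x) :
    ‖fderiv ℝ (fun y => max (v y) (w y)) x‖ ≤ max ‖fderiv ℝ v x‖ ‖fderiv ℝ w x‖ := by
  rcases lt_trichotomy (v x) (w x) with h | h | h
  · have hev : (fun y => max (v y) (w y)) =ᶠ[𝓝 x] w := by
      filter_upwards [hv.eventually_lt hw h] with y hy using max_eq_right hy.le
    rw [hev.fderiv_eq]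
    exact le_max_right _ _
  · by_cases hdm : DifferentiableAt ℝ (fun y => max (v y) (w y)) x
    · -- `max v w - v` is minimal (zero) at `x`, so both functions have the same derivative.
      have hmin : IsLocalMin (fun y => max (v y) (w y) - v y) x :=
        Eventually.of_forall fun y => by simp [h]
      have h0 := hmin.fderiv_eq_zero
      rw [fderiv_fun_sub hdm hdv, sub_eq_zero] at h0
      rw [h0]
      exact le_max_left _ _
    · rw [fderiv_zero_of_not_differentiableAt hdm, norm_zero]
      exact le_max_of_le_left (norm_nonneg _)
  · have hev : (fun y => max (v y) (w y)) =ᶠ[𝓝 x] v := by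
      filter_upwards [hw.eventually_lt hv h] with y hy using max_eq_left hy.le
    rw [hev.fderiv_eq]
    exact le_max_left _ _

protected lemma LocallyLipschitzOn.max {α : Type*} [PseudoEMetricSpace α] {s : Set α}
    {f g : α → ℝ} (hf : LocallyLipschitzOn s f) (hg : LocallyLipschitzOn s g) :
    LocallyLipschitzOn s (fun x => max (f x) (g x)) :=
  locallyLipschitzOn_iff_restrict.2 (hf.restrict.max hg.restrict)

theorem LocallyLipschitzOn.ae_differentiableAt {E F : Type*} [NormedAddCommGroup E]
    [NormedSpace ℝ E] [FiniteDimensional ℝ E] [MeasurableSpace E] [BorelSpace E]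
    [NormedAddCommGroup F] [NormedSpace ℝ F] [FiniteDimensional ℝ F]
    {μ : Measure E} [μ.IsAddHaarMeasure] {f : E → F} {s : Set E}
    (hf : LocallyLipschitzOn s f) (hs : IsOpen s) :
    ∀ᵐ x ∂μ, x ∈ s → DifferentiableAt ℝ f x := by
  simp only [ae_iff, Classical.not_imp]
  refine measure_null_of_locally_null _ fun x hx => ?_
  obtain ⟨K, t, ht, hK⟩ := hf hx.1
  rw [nhdsWithin_eq_nhds.2 (hs.mem_nhds hx.1)] at ht
  refine ⟨_ ∩ interior t, inter_mem_nhdsWithin _ (interior_mem_nhds.2 ht), ?_⟩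
  have hdiff := (hK.mono interior_subset).ae_differentiableWithinAt_of_mem (μ := μ)
  simp only [ae_iff, Classical.not_imp] at hdiff
  refine measure_mono_null (fun y hy => ?_) hdiff
  exact ⟨hy.2, fun h => hy.1.2 (h.differentiableAt (isOpen_interior.mem_nhds hy.2))⟩

lemma SupClosed.partialSups_mem {α : Type*} [SemilatticeSup α] {S : Set α} (hS : SupClosed S)
    {f : ℕ → α} (hf : ∀ i, f i ∈ S) (k : ℕ) : partialSups f k ∈ S := by
  rw [partialSups_eq_sup'_range]
  exact hS.finsetSup'_mem _ fun i _ => hf i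

theorem SupClosed.apply_partialSups_le_sum {α M : Type*} [SemilatticeSup α]
    [AddCommMonoid M] [PartialOrder M] [IsOrderedAddMonoid M] {S : Set α} (hS : SupClosed S)
    {Φ : α → M} (hΦ : ∀ a ∈ S, ∀ b ∈ S, Φ (a ⊔ b) ≤ Φ a + Φ b) {f : ℕ → α} (hf : ∀ i, f i ∈ S)
    (k : ℕ) : Φ (partialSups f k) ≤ ∑ i ∈ Finset.range (k + 1), Φ (f i) := by
  induction k with
  | zero => simp
  | succ k ih =>
    rw [← Order.succ_eq_add_one, partialSups_succ, Order.succ_eq_add_one, Finset.sum_range_succ]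
    exact (hΦ _ (hS.partialSups_mem hf k) _ (hf _)).trans (add_le_add_left ih _)

lemma tendsto_partialSups_ciSup {α : Type*} [ConditionallyCompleteLattice α] [TopologicalSpace α]
    [SupConvergenceClass α] {a : ℕ → α} (ha : BddAbove (range a)) :
    Tendsto (partialSups a) atTop (𝓝 (⨆ i, a i)) := by
  rw [← ciSup_partialSups_eq ha]
  exact tendsto_atTop_ciSup (partialSups a).monotone (bddAbove_range_partialSups.2 ha)

section Modular

variable {n : ℕ} {p : Eu n → ℝ} {Ω : Set (Eu n)}

lemma vModular_mono (hΩ : MeasurableSet Ω) (hp1 : ∀ x ∈ Ω, 1 ≤ p x) {f g : Eu n → ℝ}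
    (h : ∀ x ∈ Ω, |f x| ≤ |g x|) : vModular p Ω f ≤ vModular p Ω g :=
  setLIntegral_mono' hΩ fun x hx => ENNReal.ofReal_le_ofReal <|
    Real.rpow_le_rpow (abs_nonneg _) (h x hx) (zero_le_one.trans (hp1 x hx))

lemma vModular_eq_zero (hΩ : MeasurableSet Ω) (hp1 : ∀ x ∈ Ω, 1 ≤ p x) {f : Eu n → ℝ}
    (h : ∀ x ∈ Ω, f x = 0) : vModular p Ω f = 0 := by
  rw [vModular, setLIntegral_congr_fun hΩ fun x hx => by
    rw [h x hx, abs_zero, Real.zero_rpow (one_pos.trans_le (hp1 x hx)).ne', ENNReal.ofReal_zero]]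
  exact lintegral_zero

lemma vModular_max_le (hΩ : MeasurableSet Ω) (hp1 : ∀ x ∈ Ω, 1 ≤ p x) (hpm : Measurable p)
    {f g : Eu n → ℝ} (hf : Measurable f) :
    vModular p Ω (fun x => max (f x) (g x)) ≤ vModular p Ω f + vModular p Ω g := by
  rw [vModular, vModular, vModular, ← lintegral_add_left (hf.abs.pow hpm).ennreal_ofReal]
  refine setLIntegral_mono' hΩ fun x hx => ?_
  have hq : 0 ≤ p x := zero_le_one.trans (hp1 x hx)
  calc ENNReal.ofReal (|max (f x) (g x)| ^ p x)
      ≤ ENNReal.ofReal (max |f x| |g x| ^ p x) :=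
        ENNReal.ofReal_le_ofReal <| Real.rpow_le_rpow (abs_nonneg _) (abs_max_le_max_abs_abs) hq
    _ ≤ ENNReal.ofReal (|f x| ^ p x) + ENNReal.ofReal (|g x| ^ p x) := by
        rcases max_choice |f x| |g x| with h | h <;> rw [h]
        exacts [le_self_add, le_add_self]

lemma vModular_div_le_mul (hΩ : MeasurableSet Ω) (hp1 : ∀ x ∈ Ω, 1 ≤ p x) {f : Eu n → ℝ}
    {l m : ℝ} (hl : 0 < l) (hlm : l ≤ m) :
    vModular p Ω (fun x => f x / m) ≤
      ENNReal.ofReal (l / m) * vModular p Ω (fun x => f x / l) := by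
  have hm : 0 < m := hl.trans_le hlm
  rw [vModular, vModular, ← lintegral_const_mul' _ _ ENNReal.ofReal_ne_top]
  refine setLIntegral_mono' hΩ fun x hx => ?_
  have hfx : |f x / m| = l / m * |f x / l| := by
    rw [abs_div, abs_div, abs_of_pos hm, abs_of_pos hl]
    field_simp
  rw [hfx, Real.mul_rpow (by positivity) (abs_nonneg _), ← ENNReal.ofReal_mul (by positivity)]
  refine ENNReal.ofReal_le_ofReal (mul_le_mul_of_nonneg_right ?_ (by positivity))
  exact (Real.rpow_le_rpow_of_exponent_ge (by positivity) (div_le_one_of_le₀ hlm hm.le)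
    (hp1 x hx)).trans_eq (Real.rpow_one _)

lemma vModular_div_ne_top (hΩ : MeasurableSet Ω) (hp1 : ∀ x ∈ Ω, 1 ≤ p x) {M : ℝ}
    (hM : ∀ x ∈ Ω, p x ≤ M) {f : Eu n → ℝ} (hf : vModular p Ω f ≠ ⊤) {l : ℝ} (hl : 0 < l) :
    vModular p Ω (fun x => f x / l) ≠ ⊤ := by
  refine ne_top_of_le_ne_top (ENNReal.mul_ne_top ENNReal.ofReal_ne_top hf)
    (b := ENNReal.ofReal (max l⁻¹ (l⁻¹ ^ M)) * vModular p Ω f) ?_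
  rw [vModular, vModular, ← lintegral_const_mul' _ _ ENNReal.ofReal_ne_top]
  refine setLIntegral_mono' hΩ fun x hx => ?_
  rw [← ENNReal.ofReal_mul (by positivity), div_eq_inv_mul, abs_mul,
    abs_of_pos (inv_pos.2 hl), Real.mul_rpow (by positivity) (abs_nonneg _)]
  exact ENNReal.ofReal_le_ofReal <| mul_le_mul_of_nonneg_right
    (Real.rpow_le_max_of_one_le_of_le (by positivity) (hp1 x hx) (hM x hx)) (by positivity)

lemma vModular_div_le_add (hΩ : MeasurableSet Ω) (hp1 : ∀ x ∈ Ω, 1 ≤ p x)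
    (hpm : Measurable p) {f g₁ g₂ : Eu n → ℝ} (hg₁ : Measurable g₁) {l : ℝ} (hl : 0 < l)
    (h : ∀ x ∈ Ω, |f x| ≤ |g₁ x| + |g₂ x|) :
    vModular p Ω (fun x => f x / l) ≤
      vModular p Ω (fun x => g₁ x / (l / 2)) + vModular p Ω (fun x => g₂ x / (l / 2)) := by
  calc vModular p Ω (fun x => f x / l)
      ≤ vModular p Ω (fun x => max |g₁ x / (l / 2)| |g₂ x / (l / 2)|) := by
        refine vModular_mono hΩ hp1 fun x hx => ?_
        rw [abs_of_nonneg (le_max_of_le_left (abs_nonneg _)), abs_div (f x), abs_div (g₁ x),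
          abs_div (g₂ x), abs_of_pos hl, abs_of_pos (half_pos hl)]
        calc |f x| / l ≤ (|g₁ x| + |g₂ x|) / l := div_le_div_of_nonneg_right (h x hx) hl.le
          _ = (|g₁ x| / (l / 2) + |g₂ x| / (l / 2)) / 2 := by field_simp
          _ ≤ _ := by
            linarith [le_max_left (|g₁ x| / (l / 2)) (|g₂ x| / (l / 2)),
              le_max_right (|g₁ x| / (l / 2)) (|g₂ x| / (l / 2))]
    _ ≤ _ := vModular_max_le hΩ hp1 hpm (hg₁.div_const _).abs
    _ = _ := by simp only [vModular, abs_abs]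

lemma vModular_le_of_tendsto (hΩ : MeasurableSet Ω) (hp1 : ∀ x ∈ Ω, 1 ≤ p x)
    (hpm : Measurable p) {f : ℕ → Eu n → ℝ} {g : Eu n → ℝ} (hf : ∀ k, Measurable (f k))
    (hlim : ∀ x ∈ Ω, Tendsto (fun k => f k x) atTop (𝓝 (g x))) {C : ℝ≥0∞}
    (hC : ∀ k, vModular p Ω (f k) ≤ C) : vModular p Ω g ≤ C := by
  calc vModular p Ω g
      = ∫⁻ x in Ω, liminf (fun k => ENNReal.ofReal (|f k x| ^ p x)) atTop := by
        refine setLIntegral_congr_fun hΩ fun x hx => (Tendsto.liminf_eq ?_).symm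
        refine (ENNReal.continuous_ofReal.tendsto _).comp ?_
        exact (continuous_abs.rpow_const fun _ => Or.inr (zero_le_one.trans (hp1 x hx))).tendsto _
          |>.comp (hlim x hx)
    _ ≤ liminf (fun k => vModular p Ω (f k)) atTop :=
        lintegral_liminf_le fun k => ((hf k).abs.pow hpm).ennreal_ofReal
    _ ≤ C := liminf_le_of_frequently_le' (.of_forall hC)

end Modular

section LpVar

variable {n : ℕ} {p : Eu n → ℝ} {Ω : Set (Eu n)}

lemma memLpVar_zero (hΩ : MeasurableSet Ω) (hp1 : ∀ x ∈ Ω, 1 ≤ p x) :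
    MemLpVar p Ω (fun _ => 0) :=
  ⟨measurable_const, 1, one_pos, by
    rw [vModular_eq_zero hΩ hp1 fun _ _ => zero_div 1]
    exact ENNReal.zero_lt_top⟩

lemma MemLpVar.exists_vModular_div_le_one (hΩ : MeasurableSet Ω) (hp1 : ∀ x ∈ Ω, 1 ≤ p x)
    {f : Eu n → ℝ} (hf : MemLpVar p Ω f) :
    ∃ l : ℝ, 0 < l ∧ vModular p Ω (fun x => f x / l) ≤ 1 := by
  obtain ⟨-, l, hl, hfin⟩ := hf
  obtain ⟨T, hT, hTeq⟩ : ∃ T, 0 ≤ T ∧ vModular p Ω (fun x => f x / l) = ENNReal.ofReal T :=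
    ⟨_, ENNReal.toReal_nonneg, (ENNReal.ofReal_toReal hfin.ne).symm⟩
  refine ⟨l * (T + 1), by positivity, ?_⟩
  calc vModular p Ω (fun x => f x / (l * (T + 1)))
      ≤ ENNReal.ofReal (l / (l * (T + 1))) * vModular p Ω (fun x => f x / l) :=
        vModular_div_le_mul hΩ hp1 hl (le_mul_of_one_le_right hl.le (by linarith))
    _ = ENNReal.ofReal (T / (T + 1)) := by
        rw [hTeq, ← ENNReal.ofReal_mul (by positivity)]
        congr 1
        field_simp
    _ ≤ 1 := ENNReal.ofReal_le_one.2 ((div_le_one (by positivity)).2 (by linarith))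

lemma memLpVar_of_abs_le_add (hΩ : MeasurableSet Ω) (hp1 : ∀ x ∈ Ω, 1 ≤ p x)
    (hpm : Measurable p) {f g₁ g₂ : Eu n → ℝ} (hf : Measurable f)
    (h : ∀ x ∈ Ω, |f x| ≤ |g₁ x| + |g₂ x|) (h₁ : MemLpVar p Ω g₁) (h₂ : MemLpVar p Ω g₂) :
    MemLpVar p Ω f := by
  obtain ⟨hg₁, l₁, hl₁, hfin₁⟩ := h₁
  obtain ⟨-, l₂, hl₂, hfin₂⟩ := h₂
  refine ⟨hf, 2 * max l₁ l₂, by positivity, ?_⟩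
  refine (vModular_div_le_add hΩ hp1 hpm hg₁ (by positivity) h).trans_lt ?_
  rw [mul_div_cancel_left₀ _ two_ne_zero]
  exact ENNReal.add_lt_top.2
    ⟨(vModular_mono hΩ hp1 fun _ _ => abs_div_le_abs_div le_rfl hl₁ (le_max_left _ _)).trans_lt
        hfin₁,
      (vModular_mono hΩ hp1 fun _ _ => abs_div_le_abs_div le_rfl hl₂ (le_max_right _ _)).trans_lt
        hfin₂⟩

lemma MemLpVar.sub (hΩ : MeasurableSet Ω) (hp1 : ∀ x ∈ Ω, 1 ≤ p x) (hpm : Measurable p)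
    {f g : Eu n → ℝ} (hf : MemLpVar p Ω f) (hg : MemLpVar p Ω g) :
    MemLpVar p Ω (fun x => f x - g x) :=
  memLpVar_of_abs_le_add hΩ hp1 hpm (hf.1.sub hg.1) (fun _ _ => abs_sub _ _) hf hg

lemma MemLpVar.max (hΩ : MeasurableSet Ω) (hp1 : ∀ x ∈ Ω, 1 ≤ p x) (hpm : Measurable p)
    {f g : Eu n → ℝ} (hf : MemLpVar p Ω f) (hg : MemLpVar p Ω g) :
    MemLpVar p Ω (fun x => max (f x) (g x)) :=
  memLpVar_of_abs_le_add hΩ hp1 hpm (hf.1.max hg.1)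
    (fun _ _ => abs_max_le_max_abs_abs.trans (max_le_add_of_nonneg (abs_nonneg _) (abs_nonneg _)))
    hf hg

lemma luxNorm_nonneg {f : Eu n → ℝ} : 0 ≤ luxNorm p Ω f :=
  Real.sInf_nonneg fun _ hl => hl.1.le

lemma luxNorm_le {f : Eu n → ℝ} {c : ℝ} (hc : 0 < c) (h : vModular p Ω (fun x => f x / c) ≤ 1) :
    luxNorm p Ω f ≤ c :=
  csInf_le ⟨0, fun _ hl => hl.1.le⟩ ⟨hc, h⟩

lemma vModular_div_le_luxNorm_div (hΩ : MeasurableSet Ω) (hp1 : ∀ x ∈ Ω, 1 ≤ p x)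
    {f : Eu n → ℝ} (hf : MemLpVar p Ω f) {l : ℝ} (hl : luxNorm p Ω f < l) :
    vModular p Ω (fun x => f x / l) ≤ ENNReal.ofReal (luxNorm p Ω f / l) := by
  have hcont : Tendsto (fun s => ENNReal.ofReal (s / l)) (𝓝[>] (luxNorm p Ω f))
      (𝓝 (ENNReal.ofReal (luxNorm p Ω f / l))) :=
    ((ENNReal.continuous_ofReal.comp (continuous_id.div_const l)).tendsto _).mono_left
      nhdsWithin_le_nhds
  refine ge_of_tendsto hcont ?_
  filter_upwards [Ioo_mem_nhdsGT hl] with s ⟨hs, hsl⟩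
  obtain ⟨hne⟩ : Nonempty {l | 0 < l ∧ vModular p Ω (fun x => f x / l) ≤ 1} := by
    obtain ⟨l, hl⟩ := hf.exists_vModular_div_le_one hΩ hp1
    exact ⟨⟨l, hl⟩⟩
  obtain ⟨r, ⟨hr, hr1⟩, hrs⟩ := exists_lt_of_csInf_lt ⟨hne.1, hne.2⟩ hs
  calc vModular p Ω (fun x => f x / l)
      ≤ ENNReal.ofReal (r / l) * vModular p Ω (fun x => f x / r) :=
        vModular_div_le_mul hΩ hp1 hr (hrs.trans hsl).le
    _ ≤ ENNReal.ofReal (s / l) * 1 :=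
        mul_le_mul' (ENNReal.ofReal_le_ofReal (div_le_div_of_nonneg_right hrs.le
          (hr.trans (hrs.trans hsl)).le)) hr1
    _ = ENNReal.ofReal (s / l) := mul_one _

def ModularTendsto (p : Eu n → ℝ) (Ω : Set (Eu n)) (h : ℕ → Eu n → ℝ) : Prop :=
  ∀ l : ℝ, 0 < l → Tendsto (fun j => vModular p Ω (fun x => h j x / l)) atTop (𝓝 0)

lemma ModularTendsto.tendsto_luxNorm {h : ℕ → Eu n → ℝ} (hh : ModularTendsto p Ω h) :
    Tendsto (fun j => luxNorm p Ω (h j)) atTop (𝓝 0) := by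
  refine tendsto_order.2 ⟨fun a ha => Eventually.of_forall fun j => ha.trans_le luxNorm_nonneg,
    fun a ha => ?_⟩
  filter_upwards [(hh (a / 2) (half_pos ha)).eventually_le_const zero_lt_one] with j hj
  exact (luxNorm_le (half_pos ha) hj).trans_lt (half_lt_self ha)

lemma modularTendsto_of_tendsto_luxNorm (hΩ : MeasurableSet Ω) (hp1 : ∀ x ∈ Ω, 1 ≤ p x)
    {h : ℕ → Eu n → ℝ} (hh : ∀ j, MemLpVar p Ω (h j))
    (hlux : Tendsto (fun j => luxNorm p Ω (h j)) atTop (𝓝 0)) : ModularTendsto p Ω h := by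
  intro l hl
  have hbound : Tendsto (fun j => ENNReal.ofReal (luxNorm p Ω (h j) / l)) atTop (𝓝 0) := by
    simpa [Function.comp_def] using (ENNReal.continuous_ofReal.tendsto _).comp (hlux.div_const l)
  refine tendsto_of_tendsto_of_tendsto_of_le_of_le' tendsto_const_nhds hbound
    (Eventually.of_forall fun _ => zero_le) ?_
  filter_upwards [hlux.eventually_lt_const hl] with j hj
  exact vModular_div_le_luxNorm_div hΩ hp1 (hh j) hj

lemma ModularTendsto.of_abs_le_add (hΩ : MeasurableSet Ω) (hp1 : ∀ x ∈ Ω, 1 ≤ p x)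
    (hpm : Measurable p) {h h₁ h₂ : ℕ → Eu n → ℝ} (hm : ∀ j, Measurable (h₁ j))
    (hle : ∀ j, ∀ x ∈ Ω, |h j x| ≤ |h₁ j x| + |h₂ j x|) (hh₁ : ModularTendsto p Ω h₁)
    (hh₂ : ModularTendsto p Ω h₂) : ModularTendsto p Ω h := by
  intro l hl
  have hsum := (hh₁ (l / 2) (half_pos hl)).add (hh₂ (l / 2) (half_pos hl))
  rw [add_zero] at hsum
  exact tendsto_of_tendsto_of_tendsto_of_le_of_le tendsto_const_nhds hsum
    (fun _ => zero_le) fun j => vModular_div_le_add hΩ hp1 hpm (hm j) hl (hle j)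

lemma ModularTendsto.of_dominated (hΩ : MeasurableSet Ω) (hp1 : ∀ x ∈ Ω, 1 ≤ p x)
    (hpm : Measurable p) {h : ℕ → Eu n → ℝ} {g : Eu n → ℝ} (hm : ∀ j, Measurable (h j))
    (hg : ∀ l : ℝ, 0 < l → vModular p Ω (fun x => g x / l) ≠ ⊤)
    (hle : ∀ j, ∀ x ∈ Ω, |h j x| ≤ |g x|)
    (hlim : ∀ x ∈ Ω, Tendsto (fun j => h j x) atTop (𝓝 0)) : ModularTendsto p Ω h := by
  intro l hl
  have hlim' : ∀ᵐ x ∂volume.restrict Ω,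
      Tendsto (fun j => ENNReal.ofReal (|h j x / l| ^ p x)) atTop (𝓝 0) := by
    filter_upwards [ae_restrict_mem hΩ] with x hx
    have hcont : Continuous fun y : ℝ => ENNReal.ofReal (|y / l| ^ p x) :=
      ENNReal.continuous_ofReal.comp <| (continuous_abs.comp (continuous_id.div_const l)).rpow_const
        fun _ => Or.inr (zero_le_one.trans (hp1 x hx))
    simpa [Function.comp_def, Real.zero_rpow (one_pos.trans_le (hp1 x hx)).ne'] using
      (hcont.tendsto 0).comp (hlim x hx)
  simpa [vModular] using tendsto_lintegral_of_dominated_convergence _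
    (fun j => (((hm j).div_const l).abs.pow hpm).ennreal_ofReal)
    (fun j => (ae_restrict_iff' hΩ).2 <| Eventually.of_forall fun x hx =>
      ENNReal.ofReal_le_ofReal <| Real.rpow_le_rpow (abs_nonneg _)
        (abs_div_le_abs_div (hle j x hx) hl le_rfl) (zero_le_one.trans (hp1 x hx)))
    (hg l hl) hlim'

end LpVar

section BV

variable {n : ℕ} {p : Eu n → ℝ} {Ω : Set (Eu n)}

lemma gradModular_const (hΩ : MeasurableSet Ω) (hp1 : ∀ x ∈ Ω, 1 ≤ p x) (c : ℝ) :
    gradModular p Ω (fun _ => c) = 0 := by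
  rw [gradModular, setLIntegral_congr_fun hΩ fun x hx => by
    rw [fderiv_fun_const, Pi.zero_apply, norm_zero,
      Real.zero_rpow (one_pos.trans_le (hp1 x hx)).ne', ENNReal.ofReal_zero]]
  exact lintegral_zero

lemma gradModular_max_le (hΩ : IsOpen Ω) (hp1 : ∀ x ∈ Ω, 1 ≤ p x) (hpm : Measurable p)
    {v w : Eu n → ℝ} (hv : LocLipOn Ω v) (hw : LocLipOn Ω w) :
    gradModular p Ω (fun x => max (v x) (w x)) ≤ gradModular p Ω v + gradModular p Ω w := by
  replace hv : LocallyLipschitzOn Ω v := hv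
  replace hw : LocallyLipschitzOn Ω w := hw
  rw [gradModular, gradModular, gradModular,
    ← lintegral_add_left ((measurable_fderiv ℝ v).norm.pow hpm).ennreal_ofReal]
  refine lintegral_mono_ae ?_
  filter_upwards [ae_restrict_mem hΩ.measurableSet,
    ae_restrict_of_ae (hv.ae_differentiableAt hΩ)] with x hx hdv
  have hq : 0 ≤ p x := zero_le_one.trans (hp1 x hx)
  have hcv := hv.continuousOn.continuousAt (hΩ.mem_nhds hx)
  have hcw := hw.continuousOn.continuousAt (hΩ.mem_nhds hx)
  calc ENNReal.ofReal (‖fderiv ℝ (fun y => max (v y) (w y)) x‖ ^ p x)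
      ≤ ENNReal.ofReal (max ‖fderiv ℝ v x‖ ‖fderiv ℝ w x‖ ^ p x) :=
        ENNReal.ofReal_le_ofReal <| Real.rpow_le_rpow (norm_nonneg _)
          (norm_fderiv_max_le hcv hcw (hdv hx)) hq
    _ ≤ ENNReal.ofReal (‖fderiv ℝ v x‖ ^ p x) + ENNReal.ofReal (‖fderiv ℝ w x‖ ^ p x) := by
        rcases max_choice ‖fderiv ℝ v x‖ ‖fderiv ℝ w x‖ with h | h <;> rw [h]
        exacts [le_self_add, le_add_self]

lemma bvModular_le_of_forall_gradModular_le {f : Eu n → ℝ} {v : ℕ → Eu n → ℝ}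
    (hv : ∀ i, LocLipOn Ω (v i) ∧ MemLpVar p Ω (v i)) (hvf : LpTendsto p Ω v f) {C : ℝ≥0∞}
    (hC : ∀ i, gradModular p Ω (v i) ≤ C) : bvModular p Ω f ≤ C :=
  (iInf₂_le v ⟨hv, hvf⟩).trans (liminf_le_of_frequently_le' (.of_forall hC))

lemma exists_seq_of_bvModular_lt {f : Eu n → ℝ} {c : ℝ≥0∞} (hf : bvModular p Ω f < c) :
    ∃ v : ℕ → Eu n → ℝ, (∀ i, LocLipOn Ω (v i) ∧ MemLpVar p Ω (v i)) ∧ LpTendsto p Ω v f ∧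
      ∀ i, gradModular p Ω (v i) < c := by
  simp only [bvModular, iInf_lt_iff] at hf
  obtain ⟨v, ⟨hv, hvf⟩, hlim⟩ := hf
  obtain ⟨φ, hφ, hφc⟩ :=
    extraction_of_frequently_atTop (frequently_lt_of_liminf_lt (by isBoundedDefault) hlim)
  exact ⟨v ∘ φ, fun i => hv (φ i), hvf.comp hφ.tendsto_atTop, hφc⟩

lemma bvModular_zero (hΩ : MeasurableSet Ω) (hp1 : ∀ x ∈ Ω, 1 ≤ p x) :
    bvModular p Ω (fun _ => 0) = 0 := by
  refine le_antisymm ?_ zero_le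
  refine bvModular_le_of_forall_gradModular_le (v := fun _ _ => 0)
    (fun _ => ⟨(LocallyLipschitz.const 0).locallyLipschitzOn, memLpVar_zero hΩ hp1⟩) ?_
    fun _ => (gradModular_const hΩ hp1 0).le
  refine ModularTendsto.tendsto_luxNorm fun l _ => ?_
  simp only [sub_self, zero_div, vModular_eq_zero hΩ hp1 fun _ _ => rfl, tendsto_const_nhds]

lemma bvModular_max_le (hΩ : IsOpen Ω) (hp1 : ∀ x ∈ Ω, 1 ≤ p x) (hpm : Measurable p)
    {f g : Eu n → ℝ} (hf : MemLpVar p Ω f) (hg : MemLpVar p Ω g) :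
    bvModular p Ω (fun x => max (f x) (g x)) ≤ bvModular p Ω f + bvModular p Ω g := by
  have hΩm := hΩ.measurableSet
  refine ENNReal.le_of_forall_pos_le_add fun ε hε hlt => ?_
  obtain ⟨hf_lt, hg_lt⟩ := ENNReal.add_lt_top.1 hlt
  have hε2 : (ε / 2 : ℝ≥0∞) ≠ 0 := by simpa using hε.ne'
  obtain ⟨v, hv, hvf, hvC⟩ := exists_seq_of_bvModular_lt (ENNReal.lt_add_right hf_lt.ne hε2)
  obtain ⟨w, hw, hwg, hwC⟩ := exists_seq_of_bvModular_lt (ENNReal.lt_add_right hg_lt.ne hε2)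
  refine bvModular_le_of_forall_gradModular_le (v := fun i x => max (v i x) (w i x))
    (fun i => ⟨LocallyLipschitzOn.max (hv i).1 (hw i).1, (hv i).2.max hΩm hp1 hpm (hw i).2⟩)
    ?_ fun i => ?_
  · refine ModularTendsto.tendsto_luxNorm <| ModularTendsto.of_abs_le_add hΩm hp1 hpm
      (fun i => (hv i).2.1.sub hf.1) (fun i x _ => abs_max_sub_max_le_abs_add_abs _ _ _ _)
      (modularTendsto_of_tendsto_luxNorm hΩm hp1 (fun i => (hv i).2.sub hΩm hp1 hpm hf) hvf)
      (modularTendsto_of_tendsto_luxNorm hΩm hp1 (fun i => (hw i).2.sub hΩm hp1 hpm hg) hwg)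
  · calc gradModular p Ω (fun x => max (v i x) (w i x))
        ≤ gradModular p Ω (v i) + gradModular p Ω (w i) :=
          gradModular_max_le hΩ hp1 hpm (hv i).1 (hw i).1
      _ ≤ (bvModular p Ω f + ε / 2) + (bvModular p Ω g + ε / 2) :=
          add_le_add (hvC i).le (hwC i).le
      _ = bvModular p Ω f + bvModular p Ω g + ε := by
          rw [add_add_add_comm, ENNReal.add_halves]

lemma bvModular_le_of_modularTendsto (hΩ : MeasurableSet Ω) (hp1 : ∀ x ∈ Ω, 1 ≤ p x)
    (hpm : Measurable p) {w : ℕ → Eu n → ℝ} {u : Eu n → ℝ} (hw : ∀ k, MemLpVar p Ω (w k))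
    (hwu : ModularTendsto p Ω (fun k x => w k x - u x)) {C : ℝ≥0∞}
    (hC : ∀ k, bvModular p Ω (w k) ≤ C) : bvModular p Ω u ≤ C := by
  refine le_of_forall_gt_imp_ge_of_dense fun c hc => ?_
  choose v hv hvw hvc using fun k => exists_seq_of_bvModular_lt ((hC k).trans_lt hc)
  have hclose : ∀ k, ∃ j, luxNorm p Ω (fun x => v k j x - w k x) < 1 / ((k : ℝ) + 1) :=
    fun k => ((hvw k).eventually (gt_mem_nhds Nat.one_div_pos_of_nat)).exists
  choose j hj using hclose
  have hzw : ModularTendsto p Ω (fun k x => v k (j k) x - w k x) :=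
    modularTendsto_of_tendsto_luxNorm hΩ hp1 (fun k => (hv k (j k)).2.sub hΩ hp1 hpm (hw k)) <|
      squeeze_zero (fun _ => luxNorm_nonneg) (fun k => (hj k).le)
        tendsto_one_div_add_atTop_nhds_zero_nat
  refine bvModular_le_of_forall_gradModular_le (fun k => hv k (j k)) ?_ fun k => (hvc k (j k)).le
  exact ModularTendsto.tendsto_luxNorm <| ModularTendsto.of_abs_le_add hΩ hp1 hpm
    (fun k => (hv k (j k)).2.1.sub (hw k).1) (fun k x _ => abs_sub_le _ (w k x) _) hzw hwu

end BV

section Capacity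

variable {n : ℕ} {p : Eu n → ℝ} {Ω : Set (Eu n)}

lemma supClosed_memLpVar (hΩ : MeasurableSet Ω) (hp1 : ∀ x ∈ Ω, 1 ≤ p x) (hpm : Measurable p) :
    SupClosed {f : Eu n → ℝ | MemLpVar p Ω f} :=
  fun _ hf _ hg => MemLpVar.max hΩ hp1 hpm hf hg

lemma tendsto_partialSups_iSup {u : ℕ → Eu n → ℝ} {x : Eu n}
    (hbdd : BddAbove (range fun i => u i x)) :
    Tendsto (fun k => partialSups u k x) atTop (𝓝 (⨆ i, u i x)) := by
  simp only [Pi.partialSups_apply]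
  exact tendsto_partialSups_ciSup hbdd

lemma vModular_iSup_le_tsum (hΩ : MeasurableSet Ω) (hp1 : ∀ x ∈ Ω, 1 ≤ p x)
    (hpm : Measurable p) {u : ℕ → Eu n → ℝ} (hu : ∀ i, MemLpVar p Ω (u i))
    (hbdd : ∀ x ∈ Ω, BddAbove (range fun i => u i x)) :
    vModular p Ω (fun x => ⨆ i, u i x) ≤ ∑' i, vModular p Ω (u i) := by
  have hS := supClosed_memLpVar hΩ hp1 hpm
  refine vModular_le_of_tendsto hΩ hp1 hpm (fun k => (hS.partialSups_mem hu k).1)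
    (fun x hx => tendsto_partialSups_iSup (hbdd x hx)) fun k => ?_
  exact (hS.apply_partialSups_le_sum (fun f hf _ _ => vModular_max_le hΩ hp1 hpm hf.1) hu k).trans
    (ENNReal.sum_le_tsum _)

lemma bvModular_iSup_le_tsum (hΩ : IsOpen Ω) (hp1 : ∀ x ∈ Ω, 1 ≤ p x)
    (hpm : Measurable p) {M : ℝ} (hM : ∀ x ∈ Ω, p x ≤ M) {u : ℕ → Eu n → ℝ}
    (hu : ∀ i, MemLpVar p Ω (u i)) (hu0 : ∀ i, ∀ x ∈ Ω, 0 ≤ u i x)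
    (hbdd : ∀ x ∈ Ω, BddAbove (range fun i => u i x))
    (hfin : vModular p Ω (fun x => ⨆ i, u i x) ≠ ⊤) :
    bvModular p Ω (fun x => ⨆ i, u i x) ≤ ∑' i, bvModular p Ω (u i) := by
  have hΩm := hΩ.measurableSet
  have hS := supClosed_memLpVar hΩm hp1 hpm
  have hw := hS.partialSups_mem hu
  have hconv : ModularTendsto p Ω (fun k x => partialSups u k x - ⨆ i, u i x) := by
    refine ModularTendsto.of_dominated hΩm hp1 hpm
      (fun k => (hw k).1.sub (Measurable.iSup fun i => (hu i).1))
      (fun l hl => vModular_div_ne_top hΩm hp1 hM hfin hl) (fun k x hx => ?_)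
      fun x hx => by simpa using (tendsto_partialSups_iSup (hbdd x hx)).sub_const (⨆ i, u i x)
    have hwx : partialSups u k x ≤ ⨆ i, u i x := by
      rw [Pi.partialSups_apply]
      exact partialSups_le _ _ _ fun i _ => le_ciSup (hbdd x hx) i
    have hw0 : 0 ≤ partialSups u k x := by
      rw [Pi.partialSups_apply]
      exact (hu0 0 x hx).trans (le_partialSups_of_le (fun i => u i x) k.zero_le)
    rw [abs_of_nonpos (sub_nonpos.2 hwx), abs_of_nonneg (hw0.trans hwx)]
    linarith
  refine bvModular_le_of_modularTendsto hΩm hp1 hpm hw hconv fun k => ?_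
  exact (hS.apply_partialSups_le_sum (fun f hf g hg => bvModular_max_le hΩ hp1 hpm hf hg) hu
    k).trans (ENNReal.sum_le_tsum _)

lemma bvCapacity_empty (hΩ : MeasurableSet Ω) (hp1 : ∀ x ∈ Ω, 1 ≤ p x) :
    bvCapacity p Ω ∅ = 0 := by
  have hadm : (fun _ => 0) ∈ admissibleBV p Ω ∅ :=
    ⟨⟨memLpVar_zero hΩ hp1, by simp [bvModular_zero hΩ hp1]⟩,
      fun _ _ => ⟨le_rfl, zero_le_one⟩, ∅, isOpen_empty, subset_rfl, fun _ hx => hx.1.elim⟩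
  refine le_antisymm ((iInf₂_le _ hadm).trans ?_) zero_le
  rw [vModular_eq_zero hΩ hp1 fun _ _ => rfl, bvModular_zero hΩ hp1, add_zero]

lemma bvCapacity_mono {E₁ E₂ : Set (Eu n)} (h : E₁ ⊆ E₂) :
    bvCapacity p Ω E₁ ≤ bvCapacity p Ω E₂ :=
  iInf₂_mono' fun u ⟨hu, h01, U, hU, hEU, hU1⟩ => ⟨u, ⟨hu, h01, U, hU, h.trans hEU, hU1⟩, le_rfl⟩

/-- The pointwise supremum of admissible functions is admissible for the union. -/
lemma bvCapacity_iUnion_le_tsum_of_mem (hΩ : IsOpen Ω) (hp1 : ∀ x ∈ Ω, 1 ≤ p x)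
    (hpm : Measurable p) {M : ℝ} (hM : ∀ x ∈ Ω, p x ≤ M) {E : ℕ → Set (Eu n)}
    {u : ℕ → Eu n → ℝ} (hu : ∀ i, u i ∈ admissibleBV p Ω (E i)) :
    bvCapacity p Ω (⋃ i, E i) ≤ ∑' i, (vModular p Ω (u i) + bvModular p Ω (u i)) := by
  have hΩm := hΩ.measurableSet
  choose hBV h01 U hU hEU hU1 using hu
  have hbdd : ∀ x ∈ Ω, BddAbove (range fun i => u i x) :=
    fun x hx => ⟨1, forall_mem_range.2 fun i => (h01 i x hx).2⟩
  rw [ENNReal.tsum_add]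
  rcases eq_or_ne (∑' i, vModular p Ω (u i) + ∑' i, bvModular p Ω (u i)) ⊤ with htop | htop
  · exact htop ▸ le_top
  obtain ⟨hvfin, hbfin⟩ := ENNReal.add_ne_top.1 htop
  have hv := vModular_iSup_le_tsum hΩm hp1 hpm (fun i => (hBV i).1) hbdd
  have hb := bvModular_iSup_le_tsum hΩ hp1 hpm hM (fun i => (hBV i).1)
    (fun i x hx => (h01 i x hx).1) hbdd (ne_top_of_le_ne_top hvfin hv)
  have hadm : (fun x => ⨆ i, u i x) ∈ admissibleBV p Ω (⋃ i, E i) := by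
    refine ⟨⟨⟨Measurable.iSup fun i => (hBV i).1.1, 1, one_pos, ?_⟩, hb.trans_lt hbfin.lt_top⟩,
      fun x hx => ⟨?_, ciSup_le fun i => (h01 i x hx).2⟩,
      ⋃ i, U i, isOpen_iUnion hU, iUnion_mono hEU, ?_⟩
    · simpa only [div_one] using hv.trans_lt hvfin.lt_top
    · exact (h01 0 x hx).1.trans (le_ciSup (hbdd x hx) 0)
    · rintro x ⟨hxU, hx⟩
      obtain ⟨i, hxi⟩ := mem_iUnion.1 hxU
      exact le_antisymm (ciSup_le fun j => (h01 j x hx).2)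
        ((hU1 i x ⟨hxi, hx⟩).symm.le.trans (le_ciSup (hbdd x hx) i))
  exact (iInf₂_le _ hadm).trans (add_le_add hv hb)

lemma bvCapacity_iUnion_le (hΩ : IsOpen Ω) (hp1 : ∀ x ∈ Ω, 1 ≤ p x) (hpm : Measurable p)
    {M : ℝ} (hM : ∀ x ∈ Ω, p x ≤ M) (E : ℕ → Set (Eu n)) :
    bvCapacity p Ω (⋃ i, E i) ≤ ∑' i, bvCapacity p Ω (E i) := by
  refine ENNReal.le_of_forall_pos_le_add fun ε hε hlt => ?_
  obtain ⟨δ, hδ, hδε⟩ := ENNReal.exists_pos_sum_of_countable (ENNReal.coe_ne_zero.2 hε.ne') ℕ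
  have hnear : ∀ i, ∃ u ∈ admissibleBV p Ω (E i),
      vModular p Ω u + bvModular p Ω u < bvCapacity p Ω (E i) + δ i := by
    intro i
    have hi : bvCapacity p Ω (E i) < bvCapacity p Ω (E i) + δ i :=
      ENNReal.lt_add_right (ne_top_of_le_ne_top hlt.ne (ENNReal.le_tsum i))
        (ENNReal.coe_ne_zero.2 (hδ i).ne')
    simpa only [bvCapacity, iInf_lt_iff, exists_prop] using hi
  choose u hu hcap using hnear
  calc bvCapacity p Ω (⋃ i, E i)
      ≤ ∑' i, (vModular p Ω (u i) + bvModular p Ω (u i)) :=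
        bvCapacity_iUnion_le_tsum_of_mem hΩ hp1 hpm hM hu
    _ ≤ ∑' i, (bvCapacity p Ω (E i) + δ i) := ENNReal.tsum_le_tsum fun i => (hcap i).le
    _ ≤ ∑' i, bvCapacity p Ω (E i) + ε := by
        rw [ENNReal.tsum_add]
        exact add_le_add le_rfl hδε.le

end Capacity

/-- the mixed capacity is an outer measure: it vanishes on `∅`,
is monotone, and is countably subadditive. -/
theorem bvCapacity_outerMeasure
    {n : ℕ} (p : Eu n → ℝ) (Ω : Set (Eu n)) (hΩ : IsOpen Ω)
    (hpm : Measurable p) (hp1 : ∀ x ∈ Ω, 1 ≤ p x) (hpb : ∃ M : ℝ, ∀ x ∈ Ω, p x ≤ M) :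
    bvCapacity p Ω (∅ : Set (Eu n)) = 0 ∧
    (∀ E₁ E₂ : Set (Eu n), E₁ ⊆ E₂ → E₂ ⊆ Ω →
      bvCapacity p Ω E₁ ≤ bvCapacity p Ω E₂) ∧
    (∀ E : ℕ → Set (Eu n), (∀ i, E i ⊆ Ω) →
      bvCapacity p Ω (⋃ i, E i) ≤ ∑' i, bvCapacity p Ω (E i)) := by
  obtain ⟨M, hM⟩ := hpb
  exact ⟨bvCapacity_empty hΩ.measurableSet hp1, fun _ _ h _ => bvCapacity_mono h,
    fun E _ => bvCapacity_iUnion_le hΩ hp1 hpm hM E⟩
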